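/- arXiv:1507.07053 — 3 statements merged into one kernel-verified Lean document; each statement's English description precedes it below -/
import Mathlib

section
/- Let q, p ∈ ℂ with q ≠ 0 and p² = q, and let Q1, Q2, Q3 ∈ ℂ with 1 − Q1Q2 q^{i−1} ≠ 0 for every integer i ≥ 1. Suppose (b_k)_{k≥0} is a sequence of complex numbers satisfying, for every k ≥ 0 (with b_{−1} = b_{−2} = 0), the recursion q^k b_k − Q1(1+Q2Q3) p q^{k−1} b_{k−1} + Q1²Q2Q3 q^{k−1} b_{k−2} = b_k − (1+Q1Q3) p b_{k−1} + Q1Q3 q b_{k−2}. Define a_k := b_k · ∏_{i=1}^k (1 − Q1Q2 q^{i−1})^{-1}. Then the formal power series Ψ := ∑_{k≥0} a_k x^k ∈ ℂ[[x]] satisfies H Ψ = 0; equivalently, for every k ≥ 0 (with a_{−1} = a_{−2} = 0), (1 − Q1Q2 q^{k−2})(1 − Q1Q2 q^{k−1}) q^k a_k − Q1(1+Q2Q3) p (1 − Q1Q2 q^{k−2}) q^{k−1} a_{k−1} + Q1²Q2Q3 q^{k−1} a_{k−2} = (1 − Q1Q2 q^{k−2})(1 − Q1Q2 q^{k−1})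 a_k − (1+Q1Q3) p (1 − Q1Q2 q^{k−2}) a_{k−1} + Q1Q3 q a_{k−2}. -/
/-!
Since `S` multiplies the `k`-th coefficient by `q^k` and `M` shifts coefficients by one, the
`k`-th coefficient of `H Ψ` vanishes exactly when the `a`-recursion holds at `k`. Writing
`b_k = (Q1Q2; q)_k a_k`, the `a`-recursion at `k + 1`, multiplied by `(Q1Q2; q)_k`, is
`(1 - Q1Q2 q^{k-1})` times the `b`-recursion at `k + 1`.
-/

/-- The substitution operator `S : ℂ[[x]] → ℂ[[x]]`, `(Sf)(x) = f(qx)`, sending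
the `k`-th coefficient `c_k` to `q^k c_k`. -/
noncomputable def Sop (q : ℂ) : Module.End ℂ (PowerSeries ℂ) where
  toFun f := PowerSeries.rescale q f
  map_add' f g := map_add _ f g
  map_smul' c f := by
    ext n
    simp [PowerSeries.coeff_rescale]
    ring

/-- Multiplication by `x` on `ℂ[[x]]`. -/
noncomputable def Mop : Module.End ℂ (PowerSeries ℂ) :=
  LinearMap.mulLeft ℂ (PowerSeries.X : PowerSeries ℂ)

/-- The operator `H(x, q^{x∂x})` of Section 5.2 of the paper. -/
noncomputable def Hop (q p Q1 Q2 Q3 : ℂ) : Module.End ℂ (PowerSeries ℂ) :=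
  (1 - (Q1 * Q2 * q ^ (-2 : ℤ)) • Sop q) * (1 - (Q1 * Q2 * q ^ (-1 : ℤ)) • Sop q)
  - ((1 + Q1 * Q3) * p) • (Mop * (1 - (Q1 * Q2 * q ^ (-1 : ℤ)) • Sop q))
  + (Q1 * Q3 * q) • (Mop * Mop)
  - (1 - (Q1 * Q2 * q ^ (-2 : ℤ)) • Sop q) * (1 - (Q1 * Q2 * q ^ (-1 : ℤ)) • Sop q) * Sop q
  + (Q1 * (1 + Q2 * Q3) * p) • (Mop * (1 - (Q1 * Q2 * q ^ (-1 : ℤ)) • Sop q) * Sop q)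
  - (Q1 ^ 2 * Q2 * Q3 * q) • (Mop * Mop * Sop q)

open PowerSeries

/-- The `k`-th coefficient for `k : ℤ`, extended by zero to `k < 0`; this encodes the paper's
convention `a_{-1} = a_{-2} = 0`. -/
noncomputable def coeffInt {R : Type*} [Semiring R] (k : ℤ) : R⟦X⟧ →ₗ[R] R :=
  if 0 ≤ k then coeff k.toNat else 0

section coeffInt

variable {R : Type*} [Semiring R]

@[simp]
theorem coeffInt_natCast (n : ℕ) (f : R⟦X⟧) : coeffInt n f = coeff n f := by
  simp [coeffInt]

theorem coeffInt_of_neg {k : ℤ} (hk : k < 0) (f : R⟦X⟧) : coeffInt k f = 0 := by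
  simp [coeffInt, not_le.2 hk]

theorem coeffInt_mk {a : ℤ → R} (ha : ∀ m : ℤ, m < 0 → a m = 0) (k : ℤ) :
    coeffInt k (mk fun n : ℕ => a n) = a k := by
  rcases lt_or_ge k 0 with hk | hk
  · rw [coeffInt_of_neg hk, ha k hk]
  · lift k to ℕ using hk
    simp

theorem coeffInt_X_mul (k : ℤ) (f : R⟦X⟧) : coeffInt k (X * f) = coeffInt (k - 1) f := by
  rcases lt_or_ge k 0 with hk | hk
  · rw [coeffInt_of_neg hk, coeffInt_of_neg (by omega)]
  · lift k to ℕ using hk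
    cases k with
    | zero => rw [coeffInt_natCast, coeff_zero_X_mul, coeffInt_of_neg (by norm_num)]
    | succ n => rw [coeffInt_natCast, coeff_succ_X_mul, Nat.cast_succ, add_sub_cancel_right,
        coeffInt_natCast]

theorem coeffInt_rescale {K : Type*} [Field K] (q : K) (k : ℤ) (f : K⟦X⟧) :
    coeffInt k (rescale q f) = q ^ k * coeffInt k f := by
  rcases lt_or_ge k 0 with hk | hk
  · simp [coeffInt_of_neg hk]
  · lift k to ℕ using hk
    simp [coeff_rescale]

end coeffInt

theorem coeffInt_Sop (q : ℂ) (k : ℤ) (f : ℂ⟦X⟧) :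
    coeffInt k (Sop q f) = q ^ k * coeffInt k f :=
  coeffInt_rescale q k f

theorem coeffInt_Mop (k : ℤ) (f : ℂ⟦X⟧) : coeffInt k (Mop f) = coeffInt (k - 1) f :=
  coeffInt_X_mul k f

/-- The `q`-Pochhammer symbol `(c; q)_n`. -/
def qPochhammer (c q : ℂ) (n : ℕ) : ℂ :=
  ∏ i ∈ Finset.range n, (1 - c * q ^ i)

theorem qPochhammer_succ (c q : ℂ) (n : ℕ) :
    qPochhammer c q (n + 1) = (1 - c * q ^ n) * qPochhammer c q n :=
  Finset.prod_range_succ_comm _ n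

section Recursions

variable (q p Q1 Q2 Q3 : ℂ)

/-- The paper's (ak-recursion) at `k`. -/
def PsiRecursionAt (a : ℤ → ℂ) (k : ℤ) : Prop :=
  (1 - Q1 * Q2 * q ^ (k - 2)) * (1 - Q1 * Q2 * q ^ (k - 1)) * q ^ k * a k
      - Q1 * (1 + Q2 * Q3) * p * (1 - Q1 * Q2 * q ^ (k - 2)) * q ^ (k - 1) * a (k - 1)
      + Q1 ^ 2 * Q2 * Q3 * q ^ (k - 1) * a (k - 2) =
    (1 - Q1 * Q2 * q ^ (k - 2)) * (1 - Q1 * Q2 * q ^ (k - 1)) * a k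
      - (1 + Q1 * Q3) * p * (1 - Q1 * Q2 * q ^ (k - 2)) * a (k - 1)
      + Q1 * Q3 * q * a (k - 2)

/-- The recursion for the coefficients `b_k` of `Φ`, from its `q`-difference equation. -/
def PhiRecursionAt (b : ℤ → ℂ) (k : ℤ) : Prop :=
  q ^ k * b k - Q1 * (1 + Q2 * Q3) * p * q ^ (k - 1) * b (k - 1)
      + Q1 ^ 2 * Q2 * Q3 * q ^ (k - 1) * b (k - 2) =
    b k - (1 + Q1 * Q3) * p * b (k - 1) + Q1 * Q3 * q * b (k - 2)

variable {q p Q1 Q2 Q3}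

theorem coeffInt_Hop_eq_zero_iff (hq : q ≠ 0) (f : ℂ⟦X⟧) (k : ℤ) :
    coeffInt k (Hop q p Q1 Q2 Q3 f) = 0 ↔ PsiRecursionAt q p Q1 Q2 Q3 (coeffInt · f) k := by
  conv_rhs => rw [PsiRecursionAt, eq_comm, ← sub_eq_zero]
  apply Eq.congr_left
  simp only [Hop, LinearMap.sub_apply, LinearMap.add_apply, LinearMap.smul_apply,
    Module.End.mul_apply, Module.End.one_apply, map_sub, map_add, map_smul, smul_eq_mul,
    coeffInt_Sop, coeffInt_Mop, sub_sub, one_add_one_eq_two, zpow_sub₀ hq, zpow_neg, zpow_one]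
  field_simp
  ring

theorem Hop_eq_zero_iff (hq : q ≠ 0) (f : ℂ⟦X⟧) :
    Hop q p Q1 Q2 Q3 f = 0 ↔
      ∀ k : ℤ, 0 ≤ k → PsiRecursionAt q p Q1 Q2 Q3 (coeffInt · f) k := by
  rw [PowerSeries.ext_iff]
  constructor
  · intro h k hk
    lift k to ℕ using hk
    rw [← coeffInt_Hop_eq_zero_iff hq, coeffInt_natCast, h, map_zero]
  · intro h n
    rw [map_zero, ← coeffInt_natCast, coeffInt_Hop_eq_zero_iff hq]
    exact h n n.cast_nonneg

theorem psiRecursionAt_succ {a b : ℤ → ℂ} {n : ℤ} {P : ℂ} (hP : P ≠ 0)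
    (hb₂ : b (n + 1) = a (n + 1) * ((1 - Q1 * Q2 * q ^ n) * P)) (hb₁ : b n = a n * P)
    (hb₀ : (1 - Q1 * Q2 * q ^ (n - 1)) * b (n - 1) = a (n - 1) * P)
    (hrec : PhiRecursionAt q p Q1 Q2 Q3 b (n + 1)) : PsiRecursionAt q p Q1 Q2 Q3 a (n + 1) := by
  have hn2 : n + 1 - 2 = n - 1 := by ring
  rw [PhiRecursionAt, add_sub_cancel_right, hn2, hb₂, hb₁] at hrec
  rw [PsiRecursionAt, add_sub_cancel_right, hn2]
  apply mul_left_cancel₀ hP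
  linear_combination (1 - Q1 * Q2 * q ^ (n - 1)) * hrec
    - (Q1 ^ 2 * Q2 * Q3 * q ^ n - Q1 * Q3 * q) * hb₀

theorem psiRecursionAt_of_phiRecursionAt {a b : ℤ → ℂ}
    (hQ : ∀ i : ℕ, 1 - Q1 * Q2 * q ^ i ≠ 0) (hbneg : ∀ m : ℤ, m < 0 → b m = 0)
    (ha : ∀ m : ℤ, a m = b m * ∏ i ∈ Finset.range m.toNat, (1 - Q1 * Q2 * q ^ i)⁻¹)
    {k : ℤ} (hk : 0 ≤ k) (hrec : PhiRecursionAt q p Q1 Q2 Q3 b k) :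
    PsiRecursionAt q p Q1 Q2 Q3 a k := by
  have hP (n : ℕ) : qPochhammer (Q1 * Q2) q n ≠ 0 := Finset.prod_ne_zero_iff.2 fun i _ => hQ i
  have haneg (m : ℤ) (hm : m < 0) : a m = 0 := by rw [ha, hbneg m hm, zero_mul]
  have hb (n : ℕ) : b n = a n * qPochhammer (Q1 * Q2) q n := by
    rw [ha, Int.toNat_natCast, Finset.prod_inv_distrib, mul_assoc, ← qPochhammer,
      inv_mul_cancel₀ (hP n), mul_one]
  obtain ⟨n, rfl⟩ := Int.eq_ofNat_of_zero_le hk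
  cases n with
  | zero => simp [PsiRecursionAt, haneg]
  | succ n =>
    have hb₀ : (1 - Q1 * Q2 * q ^ ((n : ℤ) - 1)) * b (n - 1) =
        a (n - 1) * qPochhammer (Q1 * Q2) q n := by
      cases n with
      | zero => simp [hbneg, haneg]
      | succ m =>
        rw [Nat.cast_succ, add_sub_cancel_right, hb, qPochhammer_succ, zpow_natCast]
        ring
    have hb₂ : b (n + 1) =
        a (n + 1) * ((1 - Q1 * Q2 * q ^ (n : ℤ)) * qPochhammer (Q1 * Q2) q n) := by
      rw [← Nat.cast_succ, hb, qPochhammer_succ, zpow_natCast]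
    rw [Nat.cast_succ] at hrec ⊢
    exact psiRecursionAt_succ (hP n) hb₂ (hb n) hb₀ hrec

end Recursions

theorem closed_topological_vertex_Psi_qdifference_general
    (q p Q1 Q2 Q3 : ℂ) (hq : q ≠ 0)
    (hQ : ∀ i : ℕ, 1 - Q1 * Q2 * q ^ (i : ℕ) ≠ 0)
    (b : ℤ → ℂ) (hbneg : ∀ m : ℤ, m < 0 → b m = 0)
    (hrec : ∀ k : ℤ, 0 ≤ k →
      q ^ k * b k - Q1 * (1 + Q2 * Q3) * p * q ^ (k - 1) * b (k - 1)
          + Q1 ^ 2 * Q2 * Q3 * q ^ (k - 1) * b (k - 2) =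
        b k - (1 + Q1 * Q3) * p * b (k - 1) + Q1 * Q3 * q * b (k - 2))
    (a : ℤ → ℂ)
    (ha : ∀ m : ℤ, a m = b m * ∏ i ∈ Finset.range m.toNat, (1 - Q1 * Q2 * q ^ (i : ℕ))⁻¹) :
    Hop q p Q1 Q2 Q3 (PowerSeries.mk (fun n : ℕ => a n)) = 0 ∧
    ∀ k : ℤ, 0 ≤ k →
      (1 - Q1 * Q2 * q ^ (k - 2)) * (1 - Q1 * Q2 * q ^ (k - 1)) * q ^ k * a k
          - Q1 * (1 + Q2 * Q3) * p * (1 - Q1 * Q2 * q ^ (k - 2)) * q ^ (k - 1) * a (k - 1)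
          + Q1 ^ 2 * Q2 * Q3 * q ^ (k - 1) * a (k - 2) =
        (1 - Q1 * Q2 * q ^ (k - 2)) * (1 - Q1 * Q2 * q ^ (k - 1)) * a k
          - (1 + Q1 * Q3) * p * (1 - Q1 * Q2 * q ^ (k - 2)) * a (k - 1)
          + Q1 * Q3 * q * a (k - 2) := by
  have hpsi (k : ℤ) (hk : 0 ≤ k) : PsiRecursionAt q p Q1 Q2 Q3 a k :=
    psiRecursionAt_of_phiRecursionAt hQ hbneg ha hk (hrec k hk)
  have haneg (m : ℤ) (hm : m < 0) : a m = 0 := by rw [ha, hbneg m hm, zero_mul]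
  refine ⟨(Hop_eq_zero_iff hq _).2 fun k hk => ?_, hpsi⟩
  simpa only [coeffInt_mk haneg] using hpsi k hk

/-- Theorem 2 of the paper: if `(b_k)` satisfies the recursion
coming from the `q`-difference equation for `Φ`, and
`a_k = b_k ∏_{i=1}^k (1 − Q1Q2 q^{i−1})⁻¹`, then `Ψ = ∑ a_k x^k` satisfies
`HΨ = 0`; equivalently, the `a_k` satisfy the recursion (ak-recursion). -/
theorem closed_topological_vertex_Psi_qdifference
    (q p Q1 Q2 Q3 : ℂ) (hq : q ≠ 0) (hp : p ^ 2 = q)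
    (hQ : ∀ i : ℕ, 1 - Q1 * Q2 * q ^ (i : ℕ) ≠ 0)
    (b : ℤ → ℂ) (hbneg : ∀ m : ℤ, m < 0 → b m = 0)
    (hrec : ∀ k : ℤ, 0 ≤ k →
      q ^ k * b k - Q1 * (1 + Q2 * Q3) * p * q ^ (k - 1) * b (k - 1)
          + Q1 ^ 2 * Q2 * Q3 * q ^ (k - 1) * b (k - 2) =
        b k - (1 + Q1 * Q3) * p * b (k - 1) + Q1 * Q3 * q * b (k - 2))
    (a : ℤ → ℂ)
    (ha : ∀ m : ℤ, a m = b m * ∏ i ∈ Finset.range m.toNat, (1 - Q1 * Q2 * q ^ (i : ℕ))⁻¹) :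
    Hop q p Q1 Q2 Q3 (PowerSeries.mk (fun n : ℕ => a n)) = 0 ∧
    ∀ k : ℤ, 0 ≤ k →
      (1 - Q1 * Q2 * q ^ (k - 2)) * (1 - Q1 * Q2 * q ^ (k - 1)) * q ^ k * a k
          - Q1 * (1 + Q2 * Q3) * p * (1 - Q1 * Q2 * q ^ (k - 2)) * q ^ (k - 1) * a (k - 1)
          + Q1 ^ 2 * Q2 * Q3 * q ^ (k - 1) * a (k - 2) =
        (1 - Q1 * Q2 * q ^ (k - 2)) * (1 - Q1 * Q2 * q ^ (k - 1)) * a k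
          - (1 + Q1 * Q3) * p * (1 - Q1 * Q2 * q ^ (k - 2)) * a (k - 1)
          + Q1 * Q3 * q * a (k - 2) :=
  closed_topological_vertex_Psi_qdifference_general q p Q1 Q2 Q3 hq hQ b hbneg hrec a ha
end

section
/- Let q, p ∈ ℂ with q ≠ 0 and p² = q, and let Q1, Q2, Q3 ∈ ℂ with Q1Q2 ≠ q^n for every integer n. Then for every f ∈ ℂ[[x]], H f = 0 if and only if K f = 0. -/
/-- The operator `K(x, q^{x∂x})` of Section 5.2 of the paper. -/
noncomputable def Kop (q p Q1 Q2 Q3 : ℂ) : Module.End ℂ (PowerSeries ℂ) :=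
  (1 - (Q1 * Q2 * q ^ (-1 : ℤ)) • Sop q) * (1 - Sop q)
  - ((1 + Q1 * Q3) * p) • Mop
  + (Q1 * (1 + Q2 * Q3) * p) • (Mop * Sop q)
  + (Q1 * Q3 * q) • (Mop * Mop)

/-! The factor `1 - Q1 Q2 q⁻² S` splits off `H` on the left, `H = (1 - Q1 Q2 q⁻² S) K`, which
follows from the commutation rule `S M = q M S`. On coefficients `1 - c S` acts diagonally,
multiplying `x^n` by `1 - c qⁿ`; for `c = Q1 Q2 q⁻²` these factors never vanish by genericity,
so `1 - Q1 Q2 q⁻² S` is injective and `H f = 0 ↔ K f = 0`. -/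

lemma Sop_apply (q : ℂ) (f : PowerSeries ℂ) : Sop q f = PowerSeries.rescale q f := rfl

lemma coeff_Sop (q : ℂ) (f : PowerSeries ℂ) (n : ℕ) :
    PowerSeries.coeff n (Sop q f) = q ^ n * PowerSeries.coeff n f :=
  PowerSeries.coeff_rescale f q n

lemma Sop_mul_Mop (q : ℂ) : Sop q * Mop = q • (Mop * Sop q) := by
  ext f n
  rcases n with _ | n <;>
  simp [Mop, Sop_apply, PowerSeries.coeff_rescale, PowerSeries.coeff_succ_X_mul,
    mul_comm, mul_assoc, mul_left_comm]

lemma Sop_mul_Mop_mul (q : ℂ) (A : Module.End ℂ (PowerSeries ℂ)) :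
    Sop q * (Mop * A) = q • (Mop * (Sop q * A)) := by
  rw [← mul_assoc, Sop_mul_Mop, smul_mul_assoc, mul_assoc]

lemma one_sub_smul_Sop_injective {c q : ℂ} (h : ∀ n : ℕ, c * q ^ n ≠ 1) :
    Function.Injective (1 - c • Sop q : Module.End ℂ (PowerSeries ℂ)) := by
  rw [← LinearMap.ker_eq_bot, LinearMap.ker_eq_bot']
  intro g hg
  ext n
  have hn : (1 - c * q ^ n) * PowerSeries.coeff n g = 0 := by
    simpa [coeff_Sop, sub_mul, mul_assoc] using congrArg (PowerSeries.coeff n) hg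
  simpa [sub_eq_zero, (h n).symm] using hn

lemma Hop_eq_mul_Kop (q p Q1 Q2 Q3 : ℂ) (hq : q ≠ 0) :
    Hop q p Q1 Q2 Q3 = (1 - (Q1 * Q2 * q ^ (-2 : ℤ)) • Sop q) * Kop q p Q1 Q2 Q3 := by
  unfold Hop Kop
  simp only [mul_sub, sub_mul, mul_add, add_mul, mul_one, one_mul, mul_assoc,
    smul_mul_assoc, mul_smul_comm, Sop_mul_Mop, Sop_mul_Mop_mul, smul_smul]
  match_scalars <;> field_simp

theorem closed_topological_vertex_H_reduces_to_K_general
    (q p Q1 Q2 Q3 : ℂ) (hq : q ≠ 0)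
    (hgen : ∀ n : ℤ, Q1 * Q2 ≠ q ^ n) :
    ∀ f : PowerSeries ℂ, Hop q p Q1 Q2 Q3 f = 0 ↔ Kop q p Q1 Q2 Q3 f = 0 := by
  have hfactor : ∀ n : ℕ, Q1 * Q2 * q ^ (-2 : ℤ) * q ^ n ≠ 1 := by
    intro n h
    apply hgen (2 - n)
    rw [← zpow_natCast, mul_assoc, ← zpow_add₀ hq] at h
    rw [eq_inv_of_mul_eq_one_left h, ← zpow_neg]
    ring_nf
  intro f
  rw [Hop_eq_mul_Kop q p Q1 Q2 Q3 hq, Module.End.mul_apply]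
  exact (one_sub_smul_Sop_injective hfactor).eq_iff' (map_zero _)

/-- the Ψ-half of Theorem 4 of the paper: for generic values of
`Q1, Q2` (i.e. `Q1Q2 ≠ qⁿ` for every integer `n`), `Hf = 0` iff `Kf = 0`. -/
theorem closed_topological_vertex_H_reduces_to_K
    (q p Q1 Q2 Q3 : ℂ) (hq : q ≠ 0) (hp : p ^ 2 = q)
    (hgen : ∀ n : ℤ, Q1 * Q2 ≠ q ^ n) :
    ∀ f : PowerSeries ℂ, Hop q p Q1 Q2 Q3 f = 0 ↔ Kop q p Q1 Q2 Q3 f = 0 :=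
  closed_topological_vertex_H_reduces_to_K_general q p Q1 Q2 Q3 hq hgen
end

section
/- Let q, p ∈ ℂ with p² = q and 0 < |q| < 1, and let Q1, Q2, Q3 ∈ ℂ. The function Φ̃(x) := ∏_{i=1}^∞ [(1 + pq^{i−1}x)(1 + Q1Q3 pq^{i−1}x)] / [(1 + Q1 pq^{i−1}x)(1 + Q1Q2Q3 pq^{i−1}x)] is holomorphic in a neighborhood of 0 with Φ̃(0) = 1, and its Taylor coefficients b̃_k at 0 satisfy, for every k ≥ 0 (with b̃_{−1} = b̃_{−2} = 0), the recursion q^k b̃_k + (1+Q1Q3) p q^{k−1} b̃_{k−1} + Q1Q3 q^{k−1} b̃_{k−2} = b̃_k + Q1(1+Q2Q3) p b̃_{k−1} + Q1²Q2Q3 q b̃_{k−2}. -/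
/-- The factor of the infinite product `Φ̃(x)` indexed by (0-based) `i : ℕ`,
where `p` plays the role of `q^{1/2}`, so `p * q^i = q^{(i+1)−1/2}`. -/
noncomputable def PhiTildeFactor (q p Q1 Q2 Q3 x : ℂ) (i : ℕ) : ℂ :=
  ((1 + (p * q ^ i) * x) * (1 + Q1 * Q3 * (p * q ^ i) * x)) /
    ((1 + Q1 * (p * q ^ i) * x) * (1 + Q1 * Q2 * Q3 * (p * q ^ i) * x))

/-- The Taylor coefficients of a power series extended by `0` to negative
integer indices (the convention `b̃_{−1} = b̃_{−2} = 0`). -/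
noncomputable def extendedCoeff (F : FormalMultilinearSeries ℂ ℂ ℂ) (m : ℤ) : ℂ :=
  if 0 ≤ m then F.coeff m.toNat else 0

/-!
Write `g x` for the factor with index `0`, so that the `i`-th factor is `g (q ^ i * x)`. Since
`g` is analytic at `0` with `g 0 = 1`, the factors are `1 + O(‖q‖ ^ i)` uniformly near `0`, so the
product converges locally uniformly there and `Φ̃` is holomorphic near `0`. Peeling off the first
factor gives `Φ̃ x = g x * Φ̃ (q x)`; clearing the denominators of `g` (and using `p ^ 2 = q`) gives
the `q`-difference equation
`(1 + (1 + Q1 Q3) p x + Q1 Q3 q x²) Φ̃(q x) = (1 + Q1 (1 + Q2 Q3) p x + Q1² Q2 Q3 q x²) Φ̃(x)`,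
and the recursion is the comparison of the Taylor coefficients of its two sides.
-/

open Filter Metric Topology

section GeometricProduct

variable {g : ℂ → ℂ} {q : ℂ}

theorem exists_ball_hasProdLocallyUniformlyOn_comp_geometric (hg : AnalyticAt ℂ g 0)
    (hg0 : g 0 = 1) (hq : ‖q‖ < 1) :
    ∃ r > 0, (∀ i : ℕ, DifferentiableOn ℂ (fun x => g (q ^ i * x)) (ball 0 r)) ∧
      HasProdLocallyUniformlyOn (fun (i : ℕ) x => g (q ^ i * x))
        (fun x => ∏' i : ℕ, g (q ^ i * x)) (ball 0 r) := by
  obtain ⟨C, hC0, hC⟩ : ∃ C > 0, ∀ᶠ z in 𝓝 0, ‖g z - 1‖ ≤ C * ‖z‖ := by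
    obtain ⟨C, hC0, hC⟩ := hg.differentiableAt.hasDerivAt.isBigO_sub.exists_pos
    exact ⟨C, hC0, by simpa [hg0] using hC.bound⟩
  obtain ⟨r, hr, hball⟩ := eventually_nhds_iff_ball.mp (hC.and hg.eventually_analyticAt)
  have hmem : ∀ (i : ℕ), ∀ x ∈ ball (0 : ℂ) r, q ^ i * x ∈ ball (0 : ℂ) r := by
    intro i x hx
    rw [mem_ball_zero_iff, norm_mul, norm_pow] at *
    exact (mul_le_of_le_one_left (norm_nonneg x) (pow_le_one₀ (norm_nonneg q) hq.le)).trans_lt hx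
  have hdiff : ∀ i : ℕ, DifferentiableOn ℂ (fun x => g (q ^ i * x)) (ball 0 r) := fun i x hx =>
    ((hball _ (hmem i x hx)).2.differentiableAt.comp x (by fun_prop)).differentiableWithinAt
  refine ⟨r, hr, hdiff, ?_⟩
  have hbound : ∀ i : ℕ, ∀ x ∈ ball (0 : ℂ) r, ‖g (q ^ i * x) - 1‖ ≤ C * r * ‖q‖ ^ i := by
    intro i x hx
    calc ‖g (q ^ i * x) - 1‖ ≤ C * (‖q‖ ^ i * ‖x‖) := by
          simpa using (hball _ (hmem i x hx)).1
      _ ≤ C * (‖q‖ ^ i * r) := by gcongr; exact mem_ball_zero_iff.mp hx |>.le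
      _ = C * r * ‖q‖ ^ i := by ring
  simpa using Summable.hasProdLocallyUniformlyOn_one_add (f := fun i x => g (q ^ i * x) - 1)
    isOpen_ball ((summable_geometric_of_lt_one (norm_nonneg q) hq).mul_left (C * r))
    (.of_forall hbound) fun i => (hdiff i).continuousOn.sub continuousOn_const

theorem analyticAt_tprod_comp_geometric (hg : AnalyticAt ℂ g 0) (hg0 : g 0 = 1) (hq : ‖q‖ < 1) :
    AnalyticAt ℂ (fun x => ∏' i : ℕ, g (q ^ i * x)) 0 := by
  obtain ⟨r, hr, hdiff, hprod⟩ := exists_ball_hasProdLocallyUniformlyOn_comp_geometric hg hg0 hq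
  refine DifferentiableOn.analyticAt ?_ (ball_mem_nhds 0 hr)
  exact hprod.differentiableOn
    (.of_forall fun s => DifferentiableOn.fun_finsetProd fun i _ => hdiff i) isOpen_ball

theorem eventually_multipliable_comp_geometric (hg : AnalyticAt ℂ g 0) (hg0 : g 0 = 1)
    (hq : ‖q‖ < 1) : ∀ᶠ x in 𝓝 0, Multipliable fun i : ℕ => g (q ^ i * x) := by
  obtain ⟨r, hr, -, hprod⟩ := exists_ball_hasProdLocallyUniformlyOn_comp_geometric hg hg0 hq
  exact eventually_nhds_iff_ball.mpr ⟨r, hr, fun x hx => (hprod.hasProd hx).multipliable⟩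

theorem tprod_comp_geometric_eq_mul {x : ℂ} (h : Multipliable fun i : ℕ => g (q ^ i * (q * x))) :
    ∏' i : ℕ, g (q ^ i * x) = g x * ∏' i : ℕ, g (q ^ i * (q * x)) := by
  simp_rw [← mul_assoc, ← pow_succ] at h ⊢
  simpa using tprod_eq_zero_mul' (f := fun i => g (q ^ i * x)) h

end GeometricProduct

section Coefficients

variable (F : FormalMultilinearSeries ℂ ℂ ℂ)

theorem extendedCoeff_natCast (n : ℕ) : extendedCoeff F n = F.coeff n := by
  simp [extendedCoeff]

theorem extendedCoeff_of_neg {m : ℤ} (hm : m < 0) : extendedCoeff F m = 0 := by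
  simp [extendedCoeff, hm.not_ge]

theorem zpow_add_one_mul_extendedCoeff (w : ℂ) (m : ℤ) :
    w ^ (m + 1) * extendedCoeff F m = w * (w ^ m * extendedCoeff F m) := by
  rcases lt_or_ge m 0 with hm | hm
  · simp [extendedCoeff_of_neg F hm]
  · lift m to ℕ using hm
    rw [← Nat.cast_succ, zpow_natCast, zpow_natCast, pow_succ']
    ring

variable {F}

theorem hasSum_zpow_mul_extendedCoeff_sub {w x S : ℂ}
    (h : HasSum (fun n : ℕ => (w * x) ^ n * F.coeff n) S) (m : ℕ) :
    HasSum (fun k : ℕ => x ^ k * (w ^ ((k : ℤ) - m) * extendedCoeff F (k - m))) (x ^ m * S) := by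
  refine (hasSum_nat_add_iff' m).mp ?_
  have hinit : ∑ k ∈ Finset.range m, x ^ k * (w ^ ((k : ℤ) - m) * extendedCoeff F (k - m)) = 0 :=
    Finset.sum_eq_zero fun k hk => by
      rw [extendedCoeff_of_neg F (by simpa using Finset.mem_range.mp hk), mul_zero, mul_zero]
  rw [hinit, sub_zero]
  have hshift : (fun n : ℕ => x ^ (n + m) *
      (w ^ (((n + m : ℕ) : ℤ) - m) * extendedCoeff F ((n + m : ℕ) - m))) =
      fun n => x ^ m * ((w * x) ^ n * F.coeff n) := by
    funext n
    rw [Nat.cast_add, add_sub_cancel_right, extendedCoeff_natCast, zpow_natCast]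
    ring
  exact hshift ▸ h.mul_left (x ^ m)

theorem hasSum_quadratic_mul {w x S : ℂ} (a b : ℂ)
    (h : HasSum (fun n : ℕ => (w * x) ^ n * F.coeff n) S) :
    HasSum (fun k : ℕ => x ^ k * (w ^ (k : ℤ) * extendedCoeff F k
        + a * (w ^ ((k : ℤ) - 1) * extendedCoeff F ((k : ℤ) - 1))
        + b * (w ^ ((k : ℤ) - 2) * extendedCoeff F ((k : ℤ) - 2))))
      ((1 + a * x + b * x ^ 2) * S) := by
  have h0 := hasSum_zpow_mul_extendedCoeff_sub h 0
  have h1 := (hasSum_zpow_mul_extendedCoeff_sub h 1).mul_left a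
  have h2 := (hasSum_zpow_mul_extendedCoeff_sub h 2).mul_left b
  simp only [Nat.cast_zero, sub_zero, pow_zero, one_mul, Nat.cast_one, Nat.cast_ofNat] at h0 h1 h2
  convert (h0.add h1).add h2 using 1
  · ext k; ring
  · ring

end Coefficients

theorem eq_of_hasSum_pow_mul {𝕜 : Type*} [NontriviallyNormedField 𝕜] {c d : ℕ → 𝕜} {f : 𝕜 → 𝕜}
    (hc : ∀ᶠ z in 𝓝 0, HasSum (fun n => z ^ n * c n) (f z))
    (hd : ∀ᶠ z in 𝓝 0, HasSum (fun n => z ^ n * d n) (f z)) : c = d := by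
  have key : ∀ e : ℕ → 𝕜, (∀ᶠ z in 𝓝 0, HasSum (fun n => z ^ n * e n) (f z)) →
      HasFPowerSeriesAt f (FormalMultilinearSeries.ofScalars 𝕜 e) 0 := fun e he =>
    hasFPowerSeriesAt_iff.mpr (by simpa [FormalMultilinearSeries.coeff_ofScalars] using he)
  exact FormalMultilinearSeries.ofScalars_series_injective 𝕜 𝕜
    ((key c hc).eq_formalMultilinearSeries (key d hd))

section PhiTilde

noncomputable def PhiTilde (q p Q1 Q2 Q3 x : ℂ) : ℂ := ∏' i : ℕ, PhiTildeFactor q p Q1 Q2 Q3 x i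

variable {q p Q1 Q2 Q3 : ℂ}

theorem PhiTildeFactor_eq_PhiTildeFactor_zero (x : ℂ) (i : ℕ) :
    PhiTildeFactor q p Q1 Q2 Q3 x i = PhiTildeFactor q p Q1 Q2 Q3 (q ^ i * x) 0 := by
  simp only [PhiTildeFactor, pow_zero, mul_one, mul_assoc]

theorem PhiTilde_eq_tprod_comp_geometric (x : ℂ) :
    PhiTilde q p Q1 Q2 Q3 x = ∏' i : ℕ, PhiTildeFactor q p Q1 Q2 Q3 (q ^ i * x) 0 :=
  tprod_congr fun i => PhiTildeFactor_eq_PhiTildeFactor_zero x i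

theorem PhiTildeFactor_zero_zero : PhiTildeFactor q p Q1 Q2 Q3 0 0 = 1 := by
  simp [PhiTildeFactor]

theorem analyticAt_PhiTildeFactor_zero :
    AnalyticAt ℂ (fun x => PhiTildeFactor q p Q1 Q2 Q3 x 0) 0 := by
  simp only [PhiTildeFactor]
  exact AnalyticAt.div (by fun_prop) (by fun_prop) (by simp)

theorem PhiTilde_zero : PhiTilde q p Q1 Q2 Q3 0 = 1 := by
  simp [PhiTilde, PhiTildeFactor]

theorem analyticAt_PhiTilde (hq : ‖q‖ < 1) : AnalyticAt ℂ (PhiTilde q p Q1 Q2 Q3) 0 := by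
  simp only [funext PhiTilde_eq_tprod_comp_geometric]
  exact analyticAt_tprod_comp_geometric analyticAt_PhiTildeFactor_zero PhiTildeFactor_zero_zero hq

theorem PhiTildeFactor_zero_qDifference (hp : p ^ 2 = q) {x : ℂ}
    (hx : (1 + Q1 * p * x) * (1 + Q1 * Q2 * Q3 * p * x) ≠ 0) :
    (1 + Q1 * (1 + Q2 * Q3) * p * x + Q1 ^ 2 * Q2 * Q3 * q * x ^ 2) *
        PhiTildeFactor q p Q1 Q2 Q3 x 0 =
      1 + (1 + Q1 * Q3) * p * x + Q1 * Q3 * q * x ^ 2 := by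
  subst hp
  calc _ = ((1 + Q1 * p * x) * (1 + Q1 * Q2 * Q3 * p * x)) *
        (((1 + p * x) * (1 + Q1 * Q3 * p * x)) /
          ((1 + Q1 * p * x) * (1 + Q1 * Q2 * Q3 * p * x))) := by
        simp only [PhiTildeFactor, pow_zero, mul_one]; ring
    _ = (1 + p * x) * (1 + Q1 * Q3 * p * x) := mul_div_cancel₀ _ hx
    _ = _ := by ring

theorem eventually_PhiTilde_qDifference (hp : p ^ 2 = q) (hq : ‖q‖ < 1) :
    ∀ᶠ x in 𝓝 0,
      (1 + (1 + Q1 * Q3) * p * x + Q1 * Q3 * q * x ^ 2) * PhiTilde q p Q1 Q2 Q3 (q * x) =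
        (1 + Q1 * (1 + Q2 * Q3) * p * x + Q1 ^ 2 * Q2 * Q3 * q * x ^ 2) *
          PhiTilde q p Q1 Q2 Q3 x := by
  have hmult := eventually_multipliable_comp_geometric
    (analyticAt_PhiTildeFactor_zero (q := q) (p := p) (Q1 := Q1) (Q2 := Q2) (Q3 := Q3))
    PhiTildeFactor_zero_zero hq
  have hden : ∀ᶠ x in 𝓝 (0 : ℂ), (1 + Q1 * p * x) * (1 + Q1 * Q2 * Q3 * p * x) ≠ 0 :=
    ContinuousAt.eventually_ne (by fun_prop) (by simp)
  have hqx : Tendsto (fun x : ℂ => q * x) (𝓝 0) (𝓝 0) :=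
    (continuous_const_mul q).tendsto' 0 0 (mul_zero q)
  filter_upwards [hqx.eventually hmult, hden] with x hx hxden
  rw [PhiTilde_eq_tprod_comp_geometric x,
    tprod_comp_geometric_eq_mul (g := fun z => PhiTildeFactor q p Q1 Q2 Q3 z 0) hx, ← mul_assoc,
    PhiTildeFactor_zero_qDifference hp hxden, PhiTilde_eq_tprod_comp_geometric]

end PhiTilde

theorem closed_topological_vertex_PhiTilde_coeff_recursion_general
    (q p Q1 Q2 Q3 : ℂ) (hp : p ^ 2 = q)
    (hq1 : ‖q‖ < 1) :
    ∃ F : FormalMultilinearSeries ℂ ℂ ℂ,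
      HasFPowerSeriesAt (fun x : ℂ => ∏' i : ℕ, PhiTildeFactor q p Q1 Q2 Q3 x i) F 0 ∧
      F.coeff 0 = 1 ∧
      ∀ k : ℕ,
        q ^ (k : ℤ) * extendedCoeff F k
            + (1 + Q1 * Q3) * p * q ^ ((k : ℤ) - 1) * extendedCoeff F ((k : ℤ) - 1)
            + Q1 * Q3 * q ^ ((k : ℤ) - 1) * extendedCoeff F ((k : ℤ) - 2) =
          extendedCoeff F k
            + Q1 * (1 + Q2 * Q3) * p * extendedCoeff F ((k : ℤ) - 1)
            + Q1 ^ 2 * Q2 * Q3 * q * extendedCoeff F ((k : ℤ) - 2) := by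
  obtain ⟨F, hF⟩ := analyticAt_PhiTilde (p := p) (Q1 := Q1) (Q2 := Q2) (Q3 := Q3) hq1
  refine ⟨F, hF, (hF.coeff_zero fun _ => 1).trans PhiTilde_zero, fun k => ?_⟩
  have hsum : ∀ᶠ z in 𝓝 0, HasSum (fun n : ℕ => z ^ n * F.coeff n) (PhiTilde q p Q1 Q2 Q3 z) := by
    simpa using hasFPowerSeriesAt_iff.mp hF
  have hqx : Tendsto (fun x : ℂ => q * x) (𝓝 0) (𝓝 0) :=
    (continuous_const_mul q).tendsto' 0 0 (mul_zero q)
  have hlhs := (hqx.eventually hsum).mono fun x hx =>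
    hasSum_quadratic_mul ((1 + Q1 * Q3) * p) (Q1 * Q3 * q) hx
  have hrhs : ∀ᶠ x in 𝓝 0, HasSum (fun k : ℕ => x ^ k * (extendedCoeff F k
        + Q1 * (1 + Q2 * Q3) * p * extendedCoeff F ((k : ℤ) - 1)
        + Q1 ^ 2 * Q2 * Q3 * q * extendedCoeff F ((k : ℤ) - 2)))
      ((1 + (1 + Q1 * Q3) * p * x + Q1 * Q3 * q * x ^ 2) * PhiTilde q p Q1 Q2 Q3 (q * x)) := by
    filter_upwards [hsum, eventually_PhiTilde_qDifference hp hq1] with x hx hfe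
    rw [hfe]
    simpa only [one_zpow, one_mul] using hasSum_quadratic_mul (w := 1)
      (Q1 * (1 + Q2 * Q3) * p) (Q1 ^ 2 * Q2 * Q3 * q) (by simpa only [one_mul] using hx)
  have hcoeff := congrFun (eq_of_hasSum_pow_mul hlhs hrhs) k
  have hlast := zpow_add_one_mul_extendedCoeff F q ((k : ℤ) - 2)
  rw [show (k : ℤ) - 2 + 1 = (k : ℤ) - 1 by ring] at hlast
  linear_combination hcoeff + Q1 * Q3 * hlast

/-- for `p² = q` and `0 < |q| < 1`, the function
`Φ̃(x) = ∏_{i≥1} PhiTildeFactor ...` is holomorphic near `0` (it admits a power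
series expansion `F` at `0`) with `Φ̃(0) = 1` (i.e. `F.coeff 0 = 1`), and its
Taylor coefficients `b̃_k = F.coeff k` satisfy, for every `k ≥ 0` (with
`b̃_{−1} = b̃_{−2} = 0`),
`q^k b̃_k + (1+Q1Q3) p q^{k−1} b̃_{k−1} + Q1Q3 q^{k−1} b̃_{k−2}
   = b̃_k + Q1(1+Q2Q3) p b̃_{k−1} + Q1²Q2Q3 q b̃_{k−2}`. -/
theorem closed_topological_vertex_PhiTilde_coeff_recursion
    (q p Q1 Q2 Q3 : ℂ) (hp : p ^ 2 = q)
    (hq0 : 0 < ‖q‖) (hq1 : ‖q‖ < 1) :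
    ∃ F : FormalMultilinearSeries ℂ ℂ ℂ,
      HasFPowerSeriesAt (fun x : ℂ => ∏' i : ℕ, PhiTildeFactor q p Q1 Q2 Q3 x i) F 0 ∧
      F.coeff 0 = 1 ∧
      ∀ k : ℕ,
        q ^ (k : ℤ) * extendedCoeff F k
            + (1 + Q1 * Q3) * p * q ^ ((k : ℤ) - 1) * extendedCoeff F ((k : ℤ) - 1)
            + Q1 * Q3 * q ^ ((k : ℤ) - 1) * extendedCoeff F ((k : ℤ) - 2) =
          extendedCoeff F k
            + Q1 * (1 + Q2 * Q3) * p * extendedCoeff F ((k : ℤ) - 1)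
            + Q1 ^ 2 * Q2 * Q3 * q * extendedCoeff F ((k : ℤ) - 2) :=
  closed_topological_vertex_PhiTilde_coeff_recursion_general q p Q1 Q2 Q3 hp hq1
end
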